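/- arXiv:2501.08939 — 2 statements merged into one kernel-verified Lean document; each statement's English description precedes it below -/
import Mathlib

section
/- Let X₁,...,X_d, Y be random variables with densities such that X₁,...,X_d are conditionally independent given Y. If for each i the pair (Xᵢ,Y) is MTPP₂(αᵢ,1) with |αᵢ| = 1, then (X₁,...,X_d) is MTPP₂(α₁,...,α_d). -/
open MeasureTheory

/-- MTPP₂(α) for a function on `ℝ^d`. -/
def MTPP2 {d : ℕ} (f : (Fin d → ℝ) → ℝ) (α : Fin d → ℝ) : Prop :=
  ∀ i j : Fin d, i ≠ j → ∀ x : Fin d → ℝ, ∀ xi' xj' : ℝ, x i ≤ xi' → x j ≤ xj' →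
    f (fun k => α k * Function.update x i xi' k) *
      f (fun k => α k * Function.update x j xj' k) ≤
    f (fun k => α k * x k) *
      f (fun k => α k * Function.update (Function.update x i xi') j xj' k)

lemma integral_mul_integral_le (P0 P1 P2 P3 : ℝ → ℝ)
    (h0 : Integrable P0) (h1 : Integrable P1) (h2 : Integrable P2) (h3 : Integrable P3)
    (hpt : ∀ y z : ℝ, P1 y * P2 z + P2 y * P1 z ≤ P0 y * P3 z + P3 y * P0 z) :
    (∫ y, P1 y) * (∫ y, P2 y) ≤ (∫ y, P0 y) * (∫ y, P3 y) := by
  set c0 := ∫ y, P0 y with hc0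
  set c1 := ∫ y, P1 y with hc1
  set c2 := ∫ y, P2 y with hc2
  set c3 := ∫ y, P3 y with hc3
  have key : ∀ y, 0 ≤ P0 y * c3 + P3 y * c0 - (P1 y * c2 + P2 y * c1) := by
    intro y
    have i03 : Integrable (fun z => P0 y * P3 z + P3 y * P0 z) := (h3.const_mul _).add (h0.const_mul _)
    have i12 : Integrable (fun z => P1 y * P2 z + P2 y * P1 z) := (h2.const_mul _).add (h1.const_mul _)
    have hI : (0:ℝ) ≤ ∫ z, (P0 y * P3 z + P3 y * P0 z - (P1 y * P2 z + P2 y * P1 z)) :=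
      integral_nonneg fun z => by
        have := hpt y z
        simp only [Pi.zero_apply]
        linarith
    rw [integral_sub i03 i12,
        integral_add (h3.const_mul _) (h0.const_mul _),
        integral_add (h2.const_mul _) (h1.const_mul _),
        integral_const_mul _ _, integral_const_mul _ _, integral_const_mul _ _, integral_const_mul _ _] at hI
    linarith
  have j03 : Integrable (fun y => P0 y * c3 + P3 y * c0) := (h0.mul_const _).add (h3.mul_const _)
  have j12 : Integrable (fun y => P1 y * c2 + P2 y * c1) := (h1.mul_const _).add (h2.mul_const _)
  have hI2 : (0:ℝ) ≤ ∫ y, (P0 y * c3 + P3 y * c0 - (P1 y * c2 + P2 y * c1)) :=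
    integral_nonneg fun y => by simp only [Pi.zero_apply]; linarith [key y]
  rw [integral_sub j03 j12,
      integral_add (h0.mul_const _) (h3.mul_const _),
      integral_add (h1.mul_const _) (h2.mul_const _),
      integral_mul_const _ _, integral_mul_const _ _, integral_mul_const _ _, integral_mul_const _ _] at hI2
  nlinarith [hI2]

/-- let `X₁,…,X_d, Y` be random variables such that `X₁,…,X_d` are
conditionally independent given `Y`, so the joint density of `(X₁,…,X_d)` is
`f(x) = ∫ (∏ᵢ fᵢ(xᵢ | y)) g(y) dy`, where `fᵢ(·|y)` is the conditional density
of `Xᵢ` given `Y = y` and `g` is the density of `Y`.  If each pair `(Xᵢ, Y)`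
(with joint density `fᵢ(x|y) g(y)`) is MTPP₂(αᵢ, 1), i.e.
`fᵢ(αᵢx|y) fᵢ(αᵢx'|y') ≥ fᵢ(αᵢx'|y) fᵢ(αᵢx|y')` for `x ≤ x'`, `y ≤ y'`,
then `(X₁,…,X_d)` is MTPP₂(α₁,…,α_d). -/
theorem mtpp2_of_cond_indep {d : ℕ} (fc : Fin d → ℝ → ℝ → ℝ) (g : ℝ → ℝ)
    (hfc : ∀ i x y, 0 ≤ fc i x y) (hg : ∀ y, 0 ≤ g y)
    (α : Fin d → ℝ) (hα : ∀ i, |α i| = 1)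
    (hpair : ∀ i : Fin d, ∀ x x' y y' : ℝ, x ≤ x' → y ≤ y' →
      fc i (α i * x') y * fc i (α i * x) y' ≤
        fc i (α i * x) y * fc i (α i * x') y')
    (hint : ∀ x : Fin d → ℝ,
      Integrable (fun y => (∏ i, fc i (x i) y) * g y)) :
    MTPP2 (fun x : Fin d → ℝ => ∫ y : ℝ, (∏ i, fc i (x i) y) * g y) α := by
  intro i j hij x xi' xj' hxi hxj
  simp only
  set x1 := Function.update x i xi' with hx1
  set x2 := Function.update x j xj' with hx2
  set x3 := Function.update x1 j xj' with hx3
  set R : ℝ → ℝ := fun y => ∏ k ∈ (Finset.univ.erase i).erase j, fc k (α k * x k) y with hR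
  have hsplit : ∀ w : Fin d → ℝ, (∀ k, k ≠ i → k ≠ j → w k = x k) → ∀ y : ℝ,
      (∏ k, fc k (α k * w k) y) = fc i (α i * w i) y * (fc j (α j * w j) y * R y) := by
    intro w hw y
    rw [← Finset.mul_prod_erase _ _ (Finset.mem_univ i),
        ← Finset.mul_prod_erase _ _ (Finset.mem_erase.mpr ⟨hij.symm, Finset.mem_univ j⟩)]
    congr 2
    refine Finset.prod_congr rfl fun k hk => ?_
    have hk' := Finset.mem_erase.mp hk
    have hk'' := Finset.mem_erase.mp hk'.2
    rw [hw k hk''.1 hk'.1]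
  have e0 := hsplit x (fun _ _ _ => rfl)
  have e1 := hsplit x1 (fun k hki _ => Function.update_of_ne hki _ _)
  have e2 := hsplit x2 (fun k _ hkj => Function.update_of_ne hkj _ _)
  have e3 := hsplit x3 (fun k hki hkj => by
    rw [hx3, Function.update_of_ne hkj, hx1, Function.update_of_ne hki])
  have v1i : x1 i = xi' := Function.update_self _ _ _
  have v1j : x1 j = x j := Function.update_of_ne hij.symm _ _
  have v2i : x2 i = x i := Function.update_of_ne hij _ _
  have v2j : x2 j = xj' := Function.update_self _ _ _
  have v3i : x3 i = xi' := by rw [hx3, Function.update_of_ne hij, v1i]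
  have v3j : x3 j = xj' := Function.update_self _ _ _
  refine integral_mul_integral_le
    (fun y => (∏ k, fc k (α k * x k) y) * g y)
    (fun y => (∏ k, fc k (α k * x1 k) y) * g y)
    (fun y => (∏ k, fc k (α k * x2 k) y) * g y)
    (fun y => (∏ k, fc k (α k * x3 k) y) * g y)
    (hint _) (hint _) (hint _) (hint _) ?_
  intro y z
  simp only [e0, e1, e2, e3, v1i, v1j, v2i, v2j, v3i, v3j]
  have hRg : ∀ t : ℝ, 0 ≤ R t * g t :=
    fun t => mul_nonneg (Finset.prod_nonneg fun k _ => hfc k _ _) (hg t)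
  rcases le_total y z with hyz | hyz
  · have ha := hpair i (x i) xi' y z hxi hyz
    have hb := hpair j (x j) xj' y z hxj hyz
    have key := mul_nonneg (mul_nonneg (mul_nonneg (hRg y) (hRg z))
      (sub_nonneg.mpr ha)) (sub_nonneg.mpr hb)
    nlinarith [key]
  · have ha := hpair i (x i) xi' z y hxi hyz
    have hb := hpair j (x j) xj' z y hxj hyz
    have key := mul_nonneg (mul_nonneg (mul_nonneg (hRg y) (hRg z))
      (sub_nonneg.mpr ha)) (sub_nonneg.mpr hb)
    nlinarith [key]
end

section
/- Let X_{(i)} and X_{(j)} (1 ≤ i < j ≤ d) be the i-th and j-th order statistics of an i.i.d. sample of size d from a DFR distribution F with density f. Then the conditional probability P[X_{(j)} − X_{(i)} > y | X_{(i)} = x] equals P[Z ≤ F̄(x+y)/F̄(x)], where Z has a Beta(d−j+1, j−i) distribution; in particular, X_{(j)} − X_{(i)} is positively regression dependent on X_{(i)}. -/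
open MeasureTheory Filter
open Set

lemma keyJ (F f : ℝ → ℝ) (hfm : Measurable f) (hf0 : ∀ z, 0 ≤ f z)
    (hFm : Monotone F) (hF1 : ∀ x, F x < 1)
    (hdens : ∀ a : ℝ, ∫ z in Set.Ioi a, f z = 1 - F a) :
    ∀ p : ℕ, ∀ b : ℝ, ∫ z in Set.Ioi b, (1 - F z) ^ p * f z
      = (1 - F b) ^ (p + 1) / (p + 1) := by
  have hs : ∀ z, (0:ℝ) < 1 - F z := fun z => by linarith [hF1 z]
  have hInt : ∀ a : ℝ, IntegrableOn f (Set.Ioi a) := by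
    intro a
    by_contra h
    have := hdens a
    rw [MeasureTheory.integral_undef h] at this
    linarith [hs a]
  have hFmeas : Measurable F := hFm.measurable
  have hgm : ∀ p : ℕ, Measurable (fun z => (1 - F z) ^ p * f z) :=
    fun p => (((measurable_const.sub hFmeas).pow_const p).mul hfm)
  have hIntPow : ∀ (p : ℕ) (a : ℝ), IntegrableOn (fun z => (1 - F z) ^ p * f z) (Set.Ioi a) := by
    intro p a
    refine Integrable.mono ((hInt a).const_mul ((1 - F a) ^ p)) ((hgm p).aestronglyMeasurable) ?_
    rw [ae_restrict_iff' measurableSet_Ioi]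
    refine .of_forall fun z hz => ?_
    have h1 : F a ≤ F z := hFm (le_of_lt hz)
    have h2 : (0:ℝ) < 1 - F z := hs z
    have h3 : (1 - F z) ^ p ≤ (1 - F a) ^ p := pow_le_pow_left₀ (le_of_lt h2) (by linarith) p
    have h4 : 0 ≤ (1 - F z) ^ p * f z := mul_nonneg (le_of_lt (pow_pos h2 p)) (hf0 z)
    rw [Real.norm_of_nonneg h4, Real.norm_of_nonneg (mul_nonneg (le_of_lt (pow_pos (by linarith : (0:ℝ) < 1 - F a) p)) (hf0 z))]
    exact mul_le_mul_of_nonneg_right h3 (hf0 z)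
  intro p
  induction p with
  | zero => intro b; simpa using hdens b
  | succ p IH =>
    intro b
    -- notation
    set c : ℝ → ℝ := fun t => (1 - F t) ^ (p + 1) / (p + 1) with hc
    have hc_nonneg : ∀ t, 0 ≤ c t := fun t =>
      div_nonneg (le_of_lt (pow_pos (hs t) _)) (by positivity)
    have hc_mono : ∀ {u v : ℝ}, u ≤ v → c v ≤ c u := by
      intro u v huv
      have h1 : F u ≤ F v := hFm huv
      have h2 : (0:ℝ) < 1 - F v := hs v
      apply div_le_div_of_nonneg_right (c := ((p:ℝ)+1)) ?_ (by positivity)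
      exact pow_le_pow_left₀ h2.le (by linarith) _
    -- lintegral form of IH
    have hLval : ∀ a : ℝ, (∫⁻ z in Set.Ioi a, ENNReal.ofReal ((1 - F z) ^ p * f z))
        = ENNReal.ofReal (c a) := by
      intro a
      rw [← MeasureTheory.ofReal_integral_eq_lintegral_ofReal (hIntPow p a)
        (Filter.Eventually.of_forall fun z => mul_nonneg (pow_nonneg (hs z).le p) (hf0 z)), IH a]
    set T : ℝ := ∫ z in Set.Ioi b, (1 - F z) ^ (p + 1) * f z with hT
    have hT0 : 0 ≤ T := by
      apply MeasureTheory.setIntegral_nonneg measurableSet_Ioi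
      exact fun z _ => mul_nonneg (pow_nonneg (hs z).le _) (hf0 z)
    have hTof : ENNReal.ofReal T = ∫⁻ z in Set.Ioi b, ENNReal.ofReal ((1 - F z) ^ (p + 1) * f z) :=
      MeasureTheory.ofReal_integral_eq_lintegral_ofReal (hIntPow (p+1) b)
        (Filter.Eventually.of_forall fun z => mul_nonneg (pow_nonneg (hs z).le _) (hf0 z))
    -- the kernel on the product space
    set K : ℝ × ℝ → ENNReal := fun q =>
      Set.indicator {q : ℝ × ℝ | b < q.1 ∧ q.1 < q.2}
        (fun q => ENNReal.ofReal ((1 - F q.1) ^ p * f q.1) * ENNReal.ofReal (f q.2)) q with hK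
    have hSmeas : MeasurableSet {q : ℝ × ℝ | b < q.1 ∧ q.1 < q.2} :=
      (measurableSet_lt measurable_const measurable_fst).inter
        (measurableSet_lt measurable_fst measurable_snd)
    have hKmeas : Measurable K := by
      apply Measurable.indicator ?_ hSmeas
      exact ((ENNReal.measurable_ofReal.comp (hgm p)).comp measurable_fst).mul
        ((ENNReal.measurable_ofReal.comp hfm).comp measurable_snd)
    -- Step A+B+C : LHS as double lintegral
    have stepABC : (∫⁻ z in Set.Ioi b, ENNReal.ofReal ((1 - F z) ^ (p + 1) * f z))
        = ∫⁻ z, ∫⁻ w, K (z, w) := by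
      rw [← MeasureTheory.lintegral_indicator measurableSet_Ioi]
      congr 1
      funext z
      by_cases hz : z ∈ Set.Ioi b
      · rw [Set.indicator_of_mem hz]
        have h1 : ENNReal.ofReal ((1 - F z) ^ (p + 1) * f z)
            = ENNReal.ofReal ((1 - F z) ^ p * f z) * ENNReal.ofReal (1 - F z) := by
          rw [← ENNReal.ofReal_mul (mul_nonneg (pow_nonneg (hs z).le p) (hf0 z))]
          ring_nf
        have h2 : ENNReal.ofReal (1 - F z) = ∫⁻ w in Set.Ioi z, ENNReal.ofReal (f w) := by
          rw [← hdens z]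
          exact MeasureTheory.ofReal_integral_eq_lintegral_ofReal (hInt z)
            (Filter.Eventually.of_forall fun w => hf0 w)
        rw [h1, h2, ← MeasureTheory.lintegral_const_mul' _ _ ENNReal.ofReal_ne_top,
          ← MeasureTheory.lintegral_indicator measurableSet_Ioi]
        congr 1
        funext w
        by_cases hw : w ∈ Set.Ioi z
        · rw [Set.indicator_of_mem hw]
          exact (Set.indicator_of_mem (show (z, w) ∈ {q : ℝ × ℝ | b < q.1 ∧ q.1 < q.2} from ⟨hz, hw⟩) (fun q : ℝ × ℝ => ENNReal.ofReal ((1 - F q.1) ^ p * f q.1) * ENNReal.ofReal (f q.2))).symm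
        · rw [Set.indicator_of_notMem hw]
          exact (Set.indicator_of_notMem (s := {q : ℝ × ℝ | b < q.1 ∧ q.1 < q.2}) (fun (h : (z, w) ∈ {q : ℝ × ℝ | b < q.1 ∧ q.1 < q.2}) => hw h.2) (fun q : ℝ × ℝ => ENNReal.ofReal ((1 - F q.1) ^ p * f q.1) * ENNReal.ofReal (f q.2))).symm
      · rw [Set.indicator_of_notMem hz]
        symm
        simp only [hK]
        rw [← MeasureTheory.lintegral_zero]
        congr 1
        funext w
        exact Set.indicator_of_notMem (fun h => hz h.1) _
    -- Step E+F : after swapping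
    have stepEF : (∫⁻ w, ∫⁻ z, K (z, w))
        = ∫⁻ w in Set.Ioi b, ENNReal.ofReal (f w * (c b - c w)) := by
      rw [← MeasureTheory.lintegral_indicator measurableSet_Ioi]
      congr 1
      funext w
      by_cases hw : w ∈ Set.Ioi b
      · rw [Set.indicator_of_mem hw]
        have hbw : b < w := hw
        have hinner : (fun z => K (z, w)) = Set.indicator (Set.Ioo b w)
            (fun z => ENNReal.ofReal ((1 - F z) ^ p * f z) * ENNReal.ofReal (f w)) := by
          funext z
          by_cases hz : z ∈ Set.Ioo b w
          · rw [Set.indicator_of_mem hz]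
            exact Set.indicator_of_mem (show (z, w) ∈ {q : ℝ × ℝ | b < q.1 ∧ q.1 < q.2} from ⟨hz.1, hz.2⟩) (fun q : ℝ × ℝ => ENNReal.ofReal ((1 - F q.1) ^ p * f q.1) * ENNReal.ofReal (f q.2))
          · rw [Set.indicator_of_notMem hz]
            exact Set.indicator_of_notMem (s := {q : ℝ × ℝ | b < q.1 ∧ q.1 < q.2}) (fun (h : (z, w) ∈ {q : ℝ × ℝ | b < q.1 ∧ q.1 < q.2}) => hz ⟨h.1, h.2⟩) (fun q : ℝ × ℝ => ENNReal.ofReal ((1 - F q.1) ^ p * f q.1) * ENNReal.ofReal (f q.2))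
        have hIoo : (∫⁻ z in Set.Ioo b w, ENNReal.ofReal ((1 - F z) ^ p * f z))
            = ENNReal.ofReal (c b - c w) := by
          have hsplit : Set.Ioo b w ∪ Set.Ici w = Set.Ioi b := Set.Ioo_union_Ici_eq_Ioi hbw
          have hdisj : Disjoint (Set.Ioo b w) (Set.Ici w) :=
            Set.disjoint_left.mpr fun z hz hz' => absurd hz.2 (not_lt.mpr hz')
          have hunion := MeasureTheory.lintegral_union measurableSet_Ici hdisj
            (f := fun z => ENNReal.ofReal ((1 - F z) ^ p * f z)) (μ := volume)
          rw [hsplit, hLval b] at hunion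
          have hIci : (∫⁻ z in Set.Ici w, ENNReal.ofReal ((1 - F z) ^ p * f z))
              = ENNReal.ofReal (c w) := by
            rw [← MeasureTheory.restrict_Ioi_eq_restrict_Ici, hLval w]
          rw [hIci] at hunion
          rw [ENNReal.ofReal_sub _ (hc_nonneg w),
            ENNReal.eq_sub_of_add_eq ENNReal.ofReal_ne_top hunion.symm]
        rw [hinner, MeasureTheory.lintegral_indicator measurableSet_Ioo,
          MeasureTheory.lintegral_mul_const' _ _ ENNReal.ofReal_ne_top, hIoo,
          ← ENNReal.ofReal_mul (hc_nonneg b |> fun _ => sub_nonneg.mpr (hc_mono hbw.le)), mul_comm]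
      · rw [Set.indicator_of_notMem hw]
        symm
        rw [← MeasureTheory.lintegral_zero]
        congr 1
        funext z
        exact (Set.indicator_of_notMem (s := {q : ℝ × ℝ | b < q.1 ∧ q.1 < q.2}) (fun (h : (z, w) ∈ {q : ℝ × ℝ | b < q.1 ∧ q.1 < q.2}) => hw (lt_trans h.1 h.2)) (fun q : ℝ × ℝ => ENNReal.ofReal ((1 - F q.1) ^ p * f q.1) * ENNReal.ofReal (f q.2))).symm
    -- swap
    have hswap : (∫⁻ z, ∫⁻ w, K (z, w)) = ∫⁻ w, ∫⁻ z, K (z, w) :=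
      MeasureTheory.lintegral_lintegral_swap hKmeas.aemeasurable
    -- integrability of the final real integrand
    have hreq : (fun w => f w * (c b - c w)) = fun w =>
        c b * f w - (1 / ((p:ℝ) + 1)) * ((1 - F w) ^ (p + 1) * f w) := by
      funext w
      simp only [hc]
      field_simp
    have hr_int : IntegrableOn (fun w => f w * (c b - c w)) (Set.Ioi b) := by
      rw [hreq]
      exact ((hInt b).const_mul (c b)).sub ((hIntPow (p+1) b).const_mul _)
    have hr_lint : (∫⁻ w in Set.Ioi b, ENNReal.ofReal (f w * (c b - c w)))
        = ENNReal.ofReal (∫ w in Set.Ioi b, f w * (c b - c w)) := by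
      symm
      apply MeasureTheory.ofReal_integral_eq_lintegral_ofReal hr_int
      rw [Filter.EventuallyLE, ae_restrict_iff' measurableSet_Ioi]
      refine .of_forall fun w hw => mul_nonneg (hf0 w) (sub_nonneg.mpr (hc_mono (le_of_lt hw)))
    have hr_val : (∫ w in Set.Ioi b, f w * (c b - c w)) = c b * (1 - F b) - T / ((p:ℝ) + 1) := by
      rw [hreq, MeasureTheory.integral_sub ((hInt b).const_mul (c b))
        ((hIntPow (p+1) b).const_mul _), MeasureTheory.integral_const_mul,
        MeasureTheory.integral_const_mul, hdens b, ← hT]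
      ring
    -- put everything together
    have hfinal : ENNReal.ofReal T = ENNReal.ofReal (c b * (1 - F b) - T / ((p:ℝ) + 1)) := by
      rw [hTof, stepABC, hswap, stepEF, hr_lint, hr_val]
    have hexpr : T = c b * (1 - F b) - T / ((p:ℝ) + 1) := by
      rcases le_or_gt 0 (c b * (1 - F b) - T / ((p:ℝ) + 1)) with h | h
      · exact (ENNReal.ofReal_eq_ofReal_iff hT0 h).mp hfinal
      · exfalso
        rw [ENNReal.ofReal_eq_zero.mpr h.le, ENNReal.ofReal_eq_zero] at hfinal
        have hT0' : T = 0 := le_antisymm hfinal hT0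
        rw [hT0'] at h
        simp only [zero_div, sub_zero] at h
        exact absurd (mul_nonneg (hc_nonneg b) (hs b).le) (not_le.mpr h)
    -- solve the linear equation
    have hp1 : ((p:ℝ) + 1) ≠ 0 := by positivity
    have hcb : c b * (1 - F b) = (1 - F b) ^ (p + 2) / ((p:ℝ) + 1) := by
      simp only [hc]
      rw [div_mul_eq_mul_div, ← pow_succ]
    rw [hcb] at hexpr
    have : T = (1 - F b) ^ (p + 2) / ((p:ℝ) + 2) := by
      field_simp at hexpr ⊢
      linarith
    rw [← hT] at *
    rw [this]
    push_cast
    ring_nf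

lemma betaInt (m n : ℕ) (c : ℝ) :
    ∫ u in (0:ℝ)..c, u ^ n * (1 - u) ^ m
      = ∑ k ∈ Finset.range (m + 1),
          ((-1:ℝ) ^ (k + m) * (m.choose k)) * (c ^ (m - k + n + 1) / ((m - k + n : ℕ) + 1)) := by
  have hpt : ∀ u : ℝ, u ^ n * (1 - u) ^ m
      = ∑ k ∈ Finset.range (m + 1), ((-1:ℝ) ^ (k + m) * (m.choose k)) * u ^ (m - k + n) := by
    intro u
    rw [sub_pow, Finset.mul_sum]
    refine Finset.sum_congr rfl fun k hk => ?_
    rw [pow_add]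
    ring
  have h1 : (∫ u in (0:ℝ)..c, u ^ n * (1 - u) ^ m)
      = ∫ u in (0:ℝ)..c, ∑ k ∈ Finset.range (m + 1),
          ((-1:ℝ) ^ (k + m) * (m.choose k)) * u ^ (m - k + n) := by
    congr 1
    funext u
    exact hpt u
  rw [h1, intervalIntegral.integral_finset_sum]
  · refine Finset.sum_congr rfl fun k hk => ?_
    rw [intervalIntegral.integral_const_mul, integral_pow]
    congr 1
    rw [zero_pow (Nat.succ_ne_zero _)]
    push_cast
    ring
  · intro k hk
    exact (Continuous.intervalIntegrable (by continuity) _ _)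

lemma coreEq (m n : ℕ) (F f : ℝ → ℝ) (hfm : Measurable f) (hf0 : ∀ z, 0 ≤ f z)
    (hFm : Monotone F) (hF1 : ∀ x, F x < 1)
    (hdens : ∀ a : ℝ, ∫ z in Set.Ioi a, f z = 1 - F a) (x b : ℝ) :
    ∫ z in Set.Ioi b, (F z - F x) ^ m * (1 - F z) ^ n * f z / (1 - F x) ^ (m + n + 1)
      = ∫ u in (0:ℝ)..((1 - F b) / (1 - F x)), u ^ n * (1 - u) ^ m := by
  have hs : ∀ z, (0:ℝ) < 1 - F z := fun z => by linarith [hF1 z]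
  have hInt : ∀ a : ℝ, IntegrableOn f (Set.Ioi a) := by
    intro a
    by_contra h
    have := hdens a
    rw [MeasureTheory.integral_undef h] at this
    linarith [hs a]
  have hFmeas : Measurable F := hFm.measurable
  have hgm : ∀ p : ℕ, Measurable (fun z => (1 - F z) ^ p * f z) :=
    fun p => (((measurable_const.sub hFmeas).pow_const p).mul hfm)
  have hIntPow : ∀ (p : ℕ) (a : ℝ), IntegrableOn (fun z => (1 - F z) ^ p * f z) (Set.Ioi a) := by
    intro p a
    refine Integrable.mono ((hInt a).const_mul ((1 - F a) ^ p)) ((hgm p).aestronglyMeasurable) ?_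
    rw [ae_restrict_iff' measurableSet_Ioi]
    refine .of_forall fun z hz => ?_
    have h1 : F a ≤ F z := hFm (le_of_lt hz)
    have h2 : (0:ℝ) < 1 - F z := hs z
    have h3 : (1 - F z) ^ p ≤ (1 - F a) ^ p := pow_le_pow_left₀ (le_of_lt h2) (by linarith) p
    have h4 : 0 ≤ (1 - F z) ^ p * f z := mul_nonneg (le_of_lt (pow_pos h2 p)) (hf0 z)
    rw [Real.norm_of_nonneg h4, Real.norm_of_nonneg (mul_nonneg (le_of_lt (pow_pos (by linarith : (0:ℝ) < 1 - F a) p)) (hf0 z))]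
    exact mul_le_mul_of_nonneg_right h3 (hf0 z)
  have hJ := keyJ F f hfm hf0 hFm hF1 hdens
  set a : ℝ := 1 - F x with ha
  set s : ℝ := 1 - F b with hsb
  have ha0 : 0 < a := hs x
  -- pointwise binomial expansion
  have hpt : ∀ z, (F z - F x) ^ m * (1 - F z) ^ n * f z
      = ∑ k ∈ Finset.range (m + 1),
          ((-1:ℝ) ^ (k + m) * a ^ k * (m.choose k)) * ((1 - F z) ^ (m - k + n) * f z) := by
    intro z
    have h1 : F z - F x = a - (1 - F z) := by rw [ha]; ring
    rw [h1, sub_pow, Finset.sum_mul, Finset.sum_mul]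
    refine Finset.sum_congr rfl fun k hk => ?_
    rw [pow_add]
    ring
  have hL : (∫ z in Set.Ioi b, (F z - F x) ^ m * (1 - F z) ^ n * f z)
      = ∑ k ∈ Finset.range (m + 1),
          ((-1:ℝ) ^ (k + m) * a ^ k * (m.choose k)) * (s ^ (m - k + n + 1) / ((m - k + n : ℕ) + 1)) := by
    rw [MeasureTheory.integral_congr_ae (Filter.Eventually.of_forall hpt),
      MeasureTheory.integral_finset_sum _ (fun k _ => ((hIntPow (m - k + n) b).const_mul _))]
    refine Finset.sum_congr rfl fun k hk => ?_
    rw [MeasureTheory.integral_const_mul, hJ (m - k + n) b]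
  have hdiv : (∫ z in Set.Ioi b, (F z - F x) ^ m * (1 - F z) ^ n * f z / a ^ (m + n + 1))
      = (∫ z in Set.Ioi b, (F z - F x) ^ m * (1 - F z) ^ n * f z) * (a ^ (m + n + 1))⁻¹ := by
    simp_rw [div_eq_mul_inv]
    exact MeasureTheory.integral_mul_const _ _
  rw [hdiv, hL, betaInt m n (s / a), Finset.sum_mul]
  refine Finset.sum_congr rfl fun k hk => ?_
  have hk' : k ≤ m := Nat.lt_succ_iff.mp (Finset.mem_range.mp hk)
  have hq : k + (m - k + n + 1) = m + n + 1 := by omega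
  have hQ : ((m - k + n : ℕ) : ℝ) + 1 ≠ 0 := by positivity
  have hpow : a ^ (m + n + 1) = a ^ k * a ^ (m - k + n + 1) := by rw [← pow_add, hq]
  have ha0' : a ≠ 0 := ne_of_gt ha0
  have hak : a ^ k ≠ 0 := pow_ne_zero _ ha0'
  have hcancel : a ^ k * (a ^ (m + n + 1))⁻¹ = (a ^ (m - k + n + 1))⁻¹ := by
    rw [hpow, mul_inv, ← mul_assoc, mul_inv_cancel₀ hak, one_mul]
  calc (-1:ℝ) ^ (k + m) * a ^ k * (m.choose k) * (s ^ (m - k + n + 1) / ((m - k + n : ℕ) + 1))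
        * (a ^ (m + n + 1))⁻¹
      = (a ^ k * (a ^ (m + n + 1))⁻¹) *
          ((-1:ℝ) ^ (k + m) * (m.choose k) * (s ^ (m - k + n + 1) / ((m - k + n : ℕ) + 1))) := by
        ring
    _ = (a ^ (m - k + n + 1))⁻¹ *
          ((-1:ℝ) ^ (k + m) * (m.choose k) * (s ^ (m - k + n + 1) / ((m - k + n : ℕ) + 1))) := by
        rw [hcancel]
    _ = (-1:ℝ) ^ (k + m) * (m.choose k) * ((s / a) ^ (m - k + n + 1) / ((m - k + n : ℕ) + 1)) := by
        rw [div_pow]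
        ring

/-- for `1 ≤ i < j ≤ d` and an i.i.d. sample of size `d` from a
DFR distribution `F` with density `f`, the conditional probability
`P[X_{(j)} − X_{(i)} > y | X_{(i)} = x]`, computed from the conditional density
`((d−i)!/((j−i−1)!(d−j)!)) (F z − F x)^{j−i−1} (1 − F z)^{d−j} f z / (1 − F x)^{d−i}`,
equals `P[Z ≤ F̄(x+y)/F̄(x)]` where `Z ~ Beta(d−j+1, j−i)`; in particular,
`X_{(j)} − X_{(i)}` is positively regression dependent on `X_{(i)}`:
the conditional survival probability is nondecreasing in `x` for each `y ≥ 0`. -/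
theorem orderStat_spacing_prd (d i j : ℕ) (hi : 1 ≤ i) (hij : i < j) (hjd : j ≤ d)
    (F f : ℝ → ℝ) (hF : Continuous F) (hFmono : StrictMono F)
    (hF1 : ∀ x, F x < 1) (hf : ∀ z, 0 ≤ f z)
    (hdens : ∀ a : ℝ, ∫ z in Set.Ioi a, f z = 1 - F a)
    (htop : Tendsto F atTop (nhds 1))
    (hDFR : ∀ y : ℝ, 0 ≤ y → Monotone (fun x => (1 - F (x + y)) / (1 - F x))) :
    (∀ x y : ℝ, 0 ≤ y →
      (∫ z in Set.Ioi (x + y),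
          ((Nat.factorial (d - i) : ℝ) /
              ((Nat.factorial (j - i - 1)) * (Nat.factorial (d - j)))) *
            (F z - F x) ^ (j - i - 1) * (1 - F z) ^ (d - j) * f z /
              (1 - F x) ^ (d - i)) =
        ((Nat.factorial (d - i) : ℝ) /
            ((Nat.factorial (j - i - 1)) * (Nat.factorial (d - j)))) *
          ∫ u in (0:ℝ)..((1 - F (x + y)) / (1 - F x)),
            u ^ (d - j) * (1 - u) ^ (j - i - 1)) ∧
    (∀ y : ℝ, 0 ≤ y → Monotone fun x =>
      ∫ z in Set.Ioi (x + y),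
        ((Nat.factorial (d - i) : ℝ) /
            ((Nat.factorial (j - i - 1)) * (Nat.factorial (d - j)))) *
          (F z - F x) ^ (j - i - 1) * (1 - F z) ^ (d - j) * f z /
            (1 - F x) ^ (d - i)) := by
  have hs : ∀ z, (0:ℝ) < 1 - F z := fun z => by linarith [hF1 z]
  have hInt : ∀ a : ℝ, IntegrableOn f (Set.Ioi a) := by
    intro a
    by_contra h
    have := hdens a
    rw [MeasureTheory.integral_undef h] at this
    linarith [hs a]
  have hU : (⋃ n : ℕ, Set.Ioi (-(n:ℝ))) = Set.univ := by
    ext t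
    simp only [Set.mem_iUnion, Set.mem_Ioi, Set.mem_univ, iff_true]
    obtain ⟨n, hn⟩ := exists_nat_gt (-t)
    exact ⟨n, by linarith⟩
  have hfa : AEStronglyMeasurable f (volume : Measure ℝ) := by
    have h1 := aestronglyMeasurable_iUnion_iff.mpr
      (fun n : ℕ => (hInt (-(n:ℝ))).aestronglyMeasurable)
    rwa [hU, Measure.restrict_univ] at h1
  set f₀ : ℝ → ℝ := fun z => max (hfa.mk f z) 0 with hf₀
  have hf₀m : Measurable f₀ := hfa.stronglyMeasurable_mk.measurable.max measurable_const
  have hf₀0 : ∀ z, 0 ≤ f₀ z := fun z => le_max_right _ _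
  have hae : f =ᵐ[(volume : Measure ℝ)] f₀ := by
    filter_upwards [hfa.ae_eq_mk] with z hz
    rw [hf₀]
    simp only
    rw [← hz, max_eq_left (hf z)]
  have hdens₀ : ∀ a : ℝ, ∫ z in Set.Ioi a, f₀ z = 1 - F a := by
    intro a
    rw [← hdens a]
    exact MeasureTheory.integral_congr_ae (MeasureTheory.ae_restrict_of_ae hae.symm)
  set m : ℕ := j - i - 1 with hm
  set n : ℕ := d - j with hn
  have hmn : d - i = m + n + 1 := by omega
  set C : ℝ := (Nat.factorial (d - i) : ℝ) / ((Nat.factorial m) * (Nat.factorial n)) with hC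
  have hC0 : 0 ≤ C := by positivity
  have key : ∀ x y : ℝ, 0 ≤ y →
      (∫ z in Set.Ioi (x + y), C * (F z - F x) ^ m * (1 - F z) ^ n * f z / (1 - F x) ^ (d - i))
        = C * ∫ u in (0:ℝ)..((1 - F (x + y)) / (1 - F x)), u ^ n * (1 - u) ^ m := by
    intro x y hy
    have h1 : (∫ z in Set.Ioi (x + y), C * (F z - F x) ^ m * (1 - F z) ^ n * f z / (1 - F x) ^ (d - i))
        = ∫ z in Set.Ioi (x + y), C * ((F z - F x) ^ m * (1 - F z) ^ n * f₀ z / (1 - F x) ^ (m + n + 1)) := by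
      rw [hmn]
      apply MeasureTheory.integral_congr_ae
      filter_upwards [MeasureTheory.ae_restrict_of_ae hae] with z hz
      rw [hz]
      ring
    rw [h1, MeasureTheory.integral_const_mul,
      coreEq m n F f₀ hf₀m hf₀0 hFmono.monotone hF1 hdens₀ x (x + y)]
  constructor
  · intro x y hy
    exact key x y hy
  · intro y hy x1 x2 hx
    simp only
    rw [key x1 y hy, key x2 y hy]
    apply mul_le_mul_of_nonneg_left _ hC0
    set c1 : ℝ := (1 - F (x1 + y)) / (1 - F x1) with hc1
    set c2 : ℝ := (1 - F (x2 + y)) / (1 - F x2) with hc2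
    have hc12 : c1 ≤ c2 := hDFR y hy hx
    have hc1pos : 0 < c1 := div_pos (hs _) (hs _)
    have hc2le : c2 ≤ 1 := by
      rw [hc2, div_le_one (hs x2)]
      have := hFmono.monotone (le_add_of_nonneg_right hy : x2 ≤ x2 + y)
      linarith
    have hii : ∀ a b : ℝ, IntervalIntegrable (fun u : ℝ => u ^ n * (1 - u) ^ m) volume a b :=
      fun a b => Continuous.intervalIntegrable (by continuity) _ _
    have hsplit := intervalIntegral.integral_add_adjacent_intervals
      (hii 0 c1) (hii c1 c2)
    have hpos : 0 ≤ ∫ u in c1..c2, u ^ n * (1 - u) ^ m := by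
      apply intervalIntegral.integral_nonneg hc12
      intro u hu
      have h0u : 0 ≤ u := le_trans hc1pos.le hu.1
      have hu1 : u ≤ 1 := le_trans hu.2 hc2le
      exact mul_nonneg (pow_nonneg h0u n) (pow_nonneg (by linarith) m)
    linarith
end
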